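/- With Q as above and p = (p₀, P₁, P₂, p₃) with p₃ ≠ 0, define H_p to be the polar derivative of Q at p (the directional derivative of Q in direction p), and f = 2p₃·Q - (β + ⟨A,B⟩/(3p₃))·H_p. Then the Taylor expansion of f at x₀ = (1,0,0,0) has lowest-degree term (2p₃/3)·C*(B⊗³) plus terms divisible by β of order ≥ 3 and terms of order ≥ 4; consequently the tangent cone of the scheme {Q = 0, H_p = 0} at x₀ is contained in {β = 0, C*(B⊗³) = 0}. -/

import Mathlib

/-!
STATEMENT 9:
With `Q` as in Statement 8 and `p = (p₀, P₁, P₂, p₃)` with `p₃ ≠ 0`, let `H_p`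
be the polar derivative of `Q` at `p` (the directional derivative of `Q` in the
direction `p`), and `f = 2p₃·Q - (β + ⟨A,B⟩/(3p₃))·H_p`.  Then the Taylor
expansion of `f` at `x₀ = (1,0,0,0)` has vanishing homogeneous parts in degrees
`0, 1, 2`, and its degree-3 part (the lowest-degree term) equals
`(2p₃/3)·C*(B⊗³)` plus `β` times a quadratic form; consequently the tangent
cone of the scheme `{Q = 0, H_p = 0}` at `x₀` is contained in
`{β = 0, C*(B⊗³) = 0}`.
-/

open MvPolynomial

/-- Index type for the coordinates `(α, A, B, β)` of `V = ℂ ⊕ W ⊕ W* ⊕ ℂ`. -/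
abbrev VIdx (n : ℕ) := (Unit ⊕ Fin n) ⊕ (Fin n ⊕ Unit)

def αv {n : ℕ} : VIdx n := Sum.inl (Sum.inl ())
def Av {n : ℕ} (i : Fin n) : VIdx n := Sum.inl (Sum.inr i)
def Bv {n : ℕ} (i : Fin n) : VIdx n := Sum.inr (Sum.inl i)
def βv {n : ℕ} : VIdx n := Sum.inr (Sum.inr ())

/-- The pairing `⟨A,B⟩ = ∑ Aᵢ Bᵢ` as a polynomial. -/
noncomputable def pairingPoly (n : ℕ) : MvPolynomial (VIdx n) ℂ :=
  ∑ i : Fin n, X (Av i) * X (Bv i)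

/-- The quartic `Q` built from the cubics `c = C` and `c' = C*`. -/
noncomputable def quarticQ (n : ℕ) (c c' : MvPolynomial (Fin n) ℂ) :
    MvPolynomial (VIdx n) ℂ :=
  (C 3 * X αv * X βv - C (1 / 2 : ℂ) * pairingPoly n) ^ 2
    + C (1 / 3 : ℂ) * (X βv * rename Av c + X αv * rename Bv c')
    - C (1 / 54 : ℂ) *
        ∑ i : Fin n, pderiv (Av i) (rename Av c) * pderiv (Bv i) (rename Bv c')

/-- The polar `H_p = p₀ ∂Q/∂α + P₁·∂Q/∂A + P₂·∂Q/∂B + p₃ ∂Q/∂β`. -/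
noncomputable def polarH (n : ℕ) (c c' : MvPolynomial (Fin n) ℂ)
    (p₀ : ℂ) (P₁ P₂ : Fin n → ℂ) (p₃ : ℂ) : MvPolynomial (VIdx n) ℂ :=
  C p₀ * pderiv αv (quarticQ n c c')
    + ∑ i : Fin n, C (P₁ i) * pderiv (Av i) (quarticQ n c c')
    + ∑ i : Fin n, C (P₂ i) * pderiv (Bv i) (quarticQ n c c')
    + C p₃ * pderiv βv (quarticQ n c c')

/-- Taylor expansion at `x₀ = (1,0,0,0)`: substitute `α ↦ α + 1`. -/
noncomputable def taylorAtx₀ {n : ℕ} (f : MvPolynomial (VIdx n) ℂ) :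
    MvPolynomial (VIdx n) ℂ :=
  aeval (fun v : VIdx n => if v = αv then X αv + 1 else X v) f

/-
Write `u = 3αβ - ½⟨A,B⟩`, so that `Q = u² + ⅓(β·C(A) + α·C*(B)) - (1/54)·K` with `K` free of `α`.
The translation `α ↦ α + 1` sends `u` to `u + 3β` and fixes everything else, hence the Taylor
expansion of `Q` at `x₀` is `Q + 9β² + R` with `R = 6βu + ⅓C*(B)` cubic. The polar `H_p` is
the constant-coefficient derivation `D_p = ∑ pᵥ ∂ᵥ` applied to `Q`; it commutes with
translations and lowers degrees by one, so `H_p` expands as `H_p + 18p₃β + D_p R`. In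
`2p₃·Q - (β + ⟨A,B⟩/(3p₃))·H_p` the quadratic terms `18p₃β²` cancel, the cubic terms are
`(2p₃/3)·C*(B)` plus multiples of `β`, and what remains is homogeneous of degree 4 or 5.
-/

namespace MvPolynomial

variable {R σ : Type*} [CommRing R]

noncomputable def shift (a : σ → R) : MvPolynomial σ R →ₐ[R] MvPolynomial σ R :=
  aeval fun v => X v + C (a v)

@[simp]
lemma shift_X (a : σ → R) (v : σ) : shift a (X v) = X v + C (a v) :=
  aeval_X _ _

@[simp]
lemma shift_C (a : σ → R) (r : R) : shift a (C r) = C r := aeval_C _ _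

lemma shift_X_of_eq_zero {a : σ → R} {v : σ} (h : a v = 0) : shift a (X v) = X v := by
  simp [h]

lemma shift_rename {τ : Type*} {a : σ → R} {f : τ → σ} (h : ∀ t, a (f t) = 0)
    (p : MvPolynomial τ R) : shift a (rename f p) = rename f p := by
  rw [← AlgHom.comp_apply]
  congr 1
  ext t
  simp [h]

lemma pderiv_shift (a : σ → R) (i : σ) (p : MvPolynomial σ R) :
    pderiv i (shift a p) = shift a (pderiv i p) := by
  classical
  induction p using MvPolynomial.induction_on with
  | C r => simp [shift]
  | add p q hp hq => simp only [map_add, hp, hq]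
  | mul_X p s hp =>
    simp only [map_mul, pderiv_mul, shift_X, hp, map_add, pderiv_C, add_zero,
      pderiv_X]
    by_cases h : i = s <;> simp [h]

variable [Fintype σ]

noncomputable def dirDeriv (w : σ → R) : Derivation R (MvPolynomial σ R) (MvPolynomial σ R) :=
  ∑ v, w v • pderiv v

lemma dirDeriv_apply (w : σ → R) (p : MvPolynomial σ R) :
    dirDeriv w p = ∑ v, C (w v) * pderiv v p := by
  change Derivation.coeFnAddMonoidHom _ p = _
  simp [dirDeriv, map_sum, smul_eq_C_mul]

@[simp]
lemma dirDeriv_X (w : σ → R) (u : σ) : dirDeriv w (X u) = C (w u) := by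
  classical
  simp [dirDeriv_apply, pderiv_X, Pi.single_apply]

lemma IsHomogeneous.dirDeriv {p : MvPolynomial σ R} {n : ℕ} (h : p.IsHomogeneous n)
    (w : σ → R) : (dirDeriv w p).IsHomogeneous (n - 1) := by
  rw [dirDeriv_apply]
  exact IsHomogeneous.sum _ _ _ fun v _ => (h.pderiv).C_mul _

lemma shift_dirDeriv (a w : σ → R) (p : MvPolynomial σ R) :
    shift a (dirDeriv w p) = dirDeriv w (shift a p) := by
  simp [dirDeriv_apply, pderiv_shift]

end MvPolynomial

section

variable {n : ℕ}

lemma taylorAtx₀_eq_shift (f : MvPolynomial (VIdx n) ℂ) :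
    taylorAtx₀ f = shift (Pi.single αv 1) f := by
  unfold taylorAtx₀ shift
  congr 2 with v
  by_cases h : v = αv
  · subst h; simp
  · simp [h]

def polarVec (p₀ : ℂ) (P₁ P₂ : Fin n → ℂ) (p₃ : ℂ) : VIdx n → ℂ :=
  Sum.elim (Sum.elim (fun _ => p₀) P₁) (Sum.elim P₂ fun _ => p₃)

lemma polarH_eq_dirDeriv (c c' : MvPolynomial (Fin n) ℂ) (p₀ : ℂ) (P₁ P₂ : Fin n → ℂ)
    (p₃ : ℂ) :
    polarH n c c' p₀ P₁ P₂ p₃ = dirDeriv (polarVec p₀ P₁ P₂ p₃) (quarticQ n c c') := by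
  simp [polarH, dirDeriv_apply, Fintype.sum_sum_type, polarVec, αv, Av, Bv, βv, add_assoc]

noncomputable def quadraticU (n : ℕ) : MvPolynomial (VIdx n) ℂ :=
  C 3 * X αv * X βv - C (1 / 2 : ℂ) * pairingPoly n

noncomputable def taylorCubicQ (c' : MvPolynomial (Fin n) ℂ) : MvPolynomial (VIdx n) ℂ :=
  C 6 * X βv * quadraticU n + C (1 / 3 : ℂ) * rename Bv c'

lemma quarticQ_eq (c c' : MvPolynomial (Fin n) ℂ) :
    quarticQ n c c' = quadraticU n ^ 2
      + C (1 / 3 : ℂ) * (X βv * rename Av c + X αv * rename Bv c')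
      - C (1 / 54 : ℂ) *
        ∑ i : Fin n, pderiv (Av i) (rename Av c) * pderiv (Bv i) (rename Bv c') := rfl

lemma shift_αv_X_αv :
    shift (Pi.single αv 1) (X αv) = (X αv + 1 : MvPolynomial (VIdx n) ℂ) := by
  simp

lemma shift_αv_X_βv : shift (Pi.single αv 1) (X βv) = (X βv : MvPolynomial (VIdx n) ℂ) :=
  shift_X_of_eq_zero (by simp [βv, αv])

lemma shift_αv_pairingPoly : shift (Pi.single αv 1) (pairingPoly n) = pairingPoly n := by
  simp only [pairingPoly, map_sum, map_mul]
  congr! with i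
  · exact shift_X_of_eq_zero (by simp [Av, αv])
  · exact shift_X_of_eq_zero (by simp [Bv, αv])

lemma shift_αv_rename_Av (p : MvPolynomial (Fin n) ℂ) :
    shift (Pi.single αv 1) (rename Av p) = rename Av p :=
  shift_rename (fun _ => by simp [Av, αv]) p

lemma shift_αv_rename_Bv (p : MvPolynomial (Fin n) ℂ) :
    shift (Pi.single αv 1) (rename Bv p) = rename Bv p :=
  shift_rename (fun _ => by simp [Bv, αv]) p

lemma taylorAtx₀_quarticQ (c c' : MvPolynomial (Fin n) ℂ) :
    taylorAtx₀ (quarticQ n c c') = quarticQ n c c' + C 9 * X βv ^ 2 + taylorCubicQ c' := by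
  simp only [taylorAtx₀_eq_shift, quarticQ_eq, quadraticU, taylorCubicQ, map_sub, map_add,
    map_mul, map_pow, map_sum, shift_C, shift_αv_X_αv, shift_αv_X_βv, shift_αv_pairingPoly,
    ← pderiv_shift, shift_αv_rename_Av, shift_αv_rename_Bv]
  simp only [map_ofNat]
  ring

lemma isHomogeneous_pairingPoly : (pairingPoly n).IsHomogeneous 2 :=
  IsHomogeneous.sum _ _ _ fun _ _ => (isHomogeneous_X _ _).mul (isHomogeneous_X _ _)

lemma isHomogeneous_quadraticU : (quadraticU n).IsHomogeneous 2 :=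
  (((isHomogeneous_X _ _).C_mul _).mul (isHomogeneous_X _ _)).sub
    (isHomogeneous_pairingPoly.C_mul _)

lemma isHomogeneous_taylorCubicQ {c' : MvPolynomial (Fin n) ℂ} (hc' : c'.IsHomogeneous 3) :
    (taylorCubicQ c').IsHomogeneous 3 :=
  ((((isHomogeneous_X _ _).C_mul _).mul isHomogeneous_quadraticU)).add
    (hc'.rename_isHomogeneous.C_mul _)

lemma isHomogeneous_quarticQ {c c' : MvPolynomial (Fin n) ℂ} (hc : c.IsHomogeneous 3)
    (hc' : c'.IsHomogeneous 3) : (quarticQ n c c').IsHomogeneous 4 := by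
  rw [quarticQ_eq]
  refine ((isHomogeneous_quadraticU.pow 2).add
    ((((isHomogeneous_X _ _).mul hc.rename_isHomogeneous).add
      ((isHomogeneous_X _ _).mul hc'.rename_isHomogeneous)).C_mul _)).sub
    ((IsHomogeneous.sum _ _ _ fun i _ => ?_).C_mul _)
  exact hc.rename_isHomogeneous.pderiv.mul hc'.rename_isHomogeneous.pderiv

lemma taylorAtx₀_polarH (c c' : MvPolynomial (Fin n) ℂ) (p₀ : ℂ) (P₁ P₂ : Fin n → ℂ)
    (p₃ : ℂ) :
    taylorAtx₀ (polarH n c c' p₀ P₁ P₂ p₃) = polarH n c c' p₀ P₁ P₂ p₃ + C (18 * p₃) * X βv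
      + dirDeriv (polarVec p₀ P₁ P₂ p₃) (taylorCubicQ c') := by
  rw [polarH_eq_dirDeriv, taylorAtx₀_eq_shift, shift_dirDeriv, ← taylorAtx₀_eq_shift,
    taylorAtx₀_quarticQ, map_add, map_add]
  congr 2
  simp only [Derivation.leibniz, Derivation.leibniz_pow, derivation_C, dirDeriv_X, smul_eq_mul,
    nsmul_eq_mul]
  simp [polarVec, βv, map_ofNat]
  ring

lemma taylorAtx₀_polarSection_eq (c c' : MvPolynomial (Fin n) ℂ) (p₀ : ℂ)
    (P₁ P₂ : Fin n → ℂ) (p₃ : ℂ) :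
    taylorAtx₀ (C (2 * p₃) * quarticQ n c c'
        - (X βv + C (1 / (3 * p₃)) * pairingPoly n) * polarH n c c' p₀ P₁ P₂ p₃)
      = (C (2 * p₃ / 3) * rename Bv c'
          + X βv * (C (12 * p₃) * quadraticU n - dirDeriv (polarVec p₀ P₁ P₂ p₃) (taylorCubicQ c')
            - C (1 / (3 * p₃) * (18 * p₃)) * pairingPoly n))
        + (C (2 * p₃) * quarticQ n c c' - X βv * polarH n c c' p₀ P₁ P₂ p₃
            - C (1 / (3 * p₃)) * pairingPoly n * dirDeriv (polarVec p₀ P₁ P₂ p₃) (taylorCubicQ c'))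
        - C (1 / (3 * p₃)) * pairingPoly n * polarH n c c' p₀ P₁ P₂ p₃ := by
  have hR : taylorCubicQ c' = 6 * X βv * quadraticU n + C (1 / 3 : ℂ) * rename Bv c' := by
    rw [taylorCubicQ, map_ofNat]
  have hC : (C (2 * p₃ / 3) : MvPolynomial (VIdx n) ℂ) = C (2 * p₃) * C (1 / 3) := by
    rw [← map_mul]; ring_nf
  rw [hC, taylorAtx₀_eq_shift]
  simp only [map_sub, map_mul, map_add, shift_C, shift_αv_X_βv, shift_αv_pairingPoly]
  simp only [← taylorAtx₀_eq_shift, taylorAtx₀_quarticQ, taylorAtx₀_polarH, map_mul, map_ofNat]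
  linear_combination (2 * C p₃) * hR

lemma exists_taylorAtx₀_polarSection_decomposition {c c' : MvPolynomial (Fin n) ℂ}
    (hc : c.IsHomogeneous 3) (hc' : c'.IsHomogeneous 3) (p₀ : ℂ) (P₁ P₂ : Fin n → ℂ)
    (p₃ : ℂ) :
    ∃ q F₄ F₅ : MvPolynomial (VIdx n) ℂ,
      q.IsHomogeneous 2 ∧ F₄.IsHomogeneous 4 ∧ F₅.IsHomogeneous 5 ∧
      taylorAtx₀ (C (2 * p₃) * quarticQ n c c'
          - (X βv + C (1 / (3 * p₃)) * pairingPoly n) * polarH n c c' p₀ P₁ P₂ p₃)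
        = C (2 * p₃ / 3) * rename Bv c' + X βv * q + F₄ + F₅ := by
  have hQ := isHomogeneous_quarticQ hc hc'
  have hH : (polarH n c c' p₀ P₁ P₂ p₃).IsHomogeneous 3 :=
    polarH_eq_dirDeriv c c' p₀ P₁ P₂ p₃ ▸ hQ.dirDeriv _
  have hDR := (isHomogeneous_taylorCubicQ hc').dirDeriv (polarVec p₀ P₁ P₂ p₃)
  refine ⟨_, _, _, ?_, ?_, ?_, (taylorAtx₀_polarSection_eq c c' p₀ P₁ P₂ p₃).trans
    (sub_eq_add_neg _ _)⟩
  · exact ((isHomogeneous_quadraticU.C_mul _).sub hDR).sub (isHomogeneous_pairingPoly.C_mul _)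
  · exact ((hQ.C_mul _).sub ((isHomogeneous_X _ _).mul hH)).sub
      ((isHomogeneous_pairingPoly.C_mul _).mul hDR)
  · exact ((isHomogeneous_pairingPoly.C_mul _).mul hH).neg

end

theorem leading_form_of_polar_section_general
    (n : ℕ) (c c' : MvPolynomial (Fin n) ℂ)
    (hc : c.IsHomogeneous 3) (hc' : c'.IsHomogeneous 3)
    (p₀ : ℂ) (P₁ P₂ : Fin n → ℂ) (p₃ : ℂ) :
    ∀ f : MvPolynomial (VIdx n) ℂ,
      f = C (2 * p₃) * quarticQ n c c'
            - (X βv + C (1 / (3 * p₃)) * pairingPoly n)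
                * polarH n c c' p₀ P₁ P₂ p₃ →
      homogeneousComponent 0 (taylorAtx₀ f) = 0 ∧
      homogeneousComponent 1 (taylorAtx₀ f) = 0 ∧
      homogeneousComponent 2 (taylorAtx₀ f) = 0 ∧
      ∃ q : MvPolynomial (VIdx n) ℂ, q.IsHomogeneous 2 ∧
        homogeneousComponent 3 (taylorAtx₀ f) =
          C (2 * p₃ / 3) * rename Bv c' + X βv * q := by
  rintro f rfl
  obtain ⟨q, F₄, F₅, hq, hF₄, hF₅, hf⟩ :=
    exists_taylorAtx₀_polarSection_decomposition hc hc' p₀ P₁ P₂ p₃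
  have hF₃ : (C (2 * p₃ / 3) * rename Bv c' + X βv * q).IsHomogeneous 3 :=
    (hc'.rename_isHomogeneous.C_mul _).add ((isHomogeneous_X _ _).mul hq)
  simp only [hf, map_add, homogeneousComponent_of_mem hF₃, homogeneousComponent_of_mem hF₄,
    homogeneousComponent_of_mem hF₅]
  exact ⟨by simp, by simp, by simp, q, hq, by simp⟩

theorem leading_form_of_polar_section
    (n : ℕ) (c c' : MvPolynomial (Fin n) ℂ)
    (hc : c.IsHomogeneous 3) (hc' : c'.IsHomogeneous 3)
    (p₀ : ℂ) (P₁ P₂ : Fin n → ℂ) (p₃ : ℂ) (hp₃ : p₃ ≠ 0) :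
    ∀ f : MvPolynomial (VIdx n) ℂ,
      f = C (2 * p₃) * quarticQ n c c'
            - (X βv + C (1 / (3 * p₃)) * pairingPoly n)
                * polarH n c c' p₀ P₁ P₂ p₃ →
      homogeneousComponent 0 (taylorAtx₀ f) = 0 ∧
      homogeneousComponent 1 (taylorAtx₀ f) = 0 ∧
      homogeneousComponent 2 (taylorAtx₀ f) = 0 ∧
      ∃ q : MvPolynomial (VIdx n) ℂ, q.IsHomogeneous 2 ∧
        homogeneousComponent 3 (taylorAtx₀ f) =
          C (2 * p₃ / 3) * rename Bv c' + X βv * q :=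
  leading_form_of_polar_section_general n c c' hc hc' p₀ P₁ P₂ p₃
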